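/- Let τ ≥ 0 and let V ~ χ²_n. Then P(V ≤ n/(τ² + 1)) ≤ exp(-(n/4)·(τ²/(τ² + 1))²). -/

import Mathlib

/-!
Chernoff bound: for `t ≥ 0`, `P(V ≤ c) ≤ e^{tc} E[e^{-tV}]`. Tilting the Gamma(a, r) density
by `e^{-tx}` only changes its rate to `r + t`, so `E[e^{-tV}] = (r / (r + t))^a`. For
`V ~ χ²_n`, `t = τ²/2` and `s = τ²/(τ²+1)` the bound is `((1 - s) e^s)^{n/2}`, and
`(1 - s) e^s ≤ e^{-s²/2}` because `-log (1 - s) = s + s²/2 + s³/3 + ⋯`.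
-/

open MeasureTheory ProbabilityTheory

/-- The chi-squared distribution with `n` degrees of freedom, as a Gamma
distribution with shape `n/2` and rate `1/2`. -/
noncomputable def chiSqMeasure (n : ℕ) : Measure ℝ :=
  gammaMeasure ((n : ℝ) / 2) (1 / 2)

open Real

lemma Real.one_sub_mul_exp_le_exp_neg_sq_div_two {x : ℝ} (hx : 0 ≤ x) :
    (1 - x) * exp x ≤ exp (-(x ^ 2 / 2)) := by
  rcases le_or_gt 1 x with h1 | h1
  · exact (mul_nonpos_of_nonpos_of_nonneg (by linarith) (exp_nonneg x)).trans (exp_nonneg _)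
  have hlog : log (1 - x) ≤ -x - x ^ 2 / 2 := by
    have hsum := hasSum_pow_div_log_of_abs_lt_one (abs_lt.mpr ⟨by linarith, h1⟩)
    have := sum_le_hasSum (Finset.range 2) (fun i _ => by positivity) hsum
    norm_num [Finset.sum_range_succ] at this
    linarith
  calc (1 - x) * exp x = exp (log (1 - x) + x) := by rw [exp_add, exp_log (by linarith)]
    _ ≤ exp (-(x ^ 2 / 2)) := exp_le_exp.mpr (by linarith)

namespace ProbabilityTheory

lemma ofReal_exp_mul_gammaPDF {a r t : ℝ} (hr : 0 ≤ r) (hrt : 0 < r + t) (x : ℝ) :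
    ENNReal.ofReal (exp (-(t * x))) * gammaPDF a r x =
      ENNReal.ofReal ((r / (r + t)) ^ a) * gammaPDF a (r + t) x := by
  rcases lt_or_ge x 0 with hx | hx
  · simp only [gammaPDF_of_neg hx, mul_zero]
  rw [gammaPDF_of_nonneg hx, gammaPDF_of_nonneg hx, ← ENNReal.ofReal_mul (exp_nonneg _),
    ← ENNReal.ofReal_mul (by positivity), div_rpow hr hrt.le]
  congr 1
  have hpow : (r + t) ^ a ≠ 0 := (rpow_pos_of_pos hrt a).ne'
  have hsplit : exp (-((r + t) * x)) = exp (-(t * x)) * exp (-(r * x)) := by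
    rw [← exp_add]; ring_nf
  rw [hsplit]
  field_simp

lemma lintegral_exp_mul_gammaPDF {a r t : ℝ} (ha : 0 < a) (hr : 0 ≤ r) (hrt : 0 < r + t) :
    ∫⁻ x, ENNReal.ofReal (exp (-(t * x))) * gammaPDF a r x =
      ENNReal.ofReal ((r / (r + t)) ^ a) := by
  simp_rw [ofReal_exp_mul_gammaPDF hr hrt]
  rw [lintegral_const_mul' _ _ ENNReal.ofReal_ne_top, lintegral_gammaPDF_eq_one ha hrt, mul_one]

lemma gammaMeasure_Iic_le {a r t : ℝ} (ha : 0 < a) (hr : 0 < r) (ht : 0 ≤ t) (c : ℝ) :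
    gammaMeasure a r (Set.Iic c) ≤ ENNReal.ofReal (exp (t * c) * (r / (r + t)) ^ a) := by
  have hexp : ∀ x ∈ Set.Iic c,
      1 ≤ ENNReal.ofReal (exp (t * c)) * ENNReal.ofReal (exp (-(t * x))) := by
    intro x hx
    rw [← ENNReal.ofReal_mul (exp_nonneg _), ← exp_add, ENNReal.one_le_ofReal]
    exact one_le_exp (by nlinarith [Set.mem_Iic.mp hx])
  calc gammaMeasure a r (Set.Iic c) = ∫⁻ x in Set.Iic c, gammaPDF a r x :=
        withDensity_apply _ measurableSet_Iic
    _ ≤ ∫⁻ x in Set.Iic c, ENNReal.ofReal (exp (t * c)) *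
          (ENNReal.ofReal (exp (-(t * x))) * gammaPDF a r x) :=
        setLIntegral_mono' measurableSet_Iic fun x hx => by
          rw [← mul_assoc]; exact le_mul_of_one_le_left zero_le (hexp x hx)
    _ ≤ ∫⁻ x, ENNReal.ofReal (exp (t * c)) *
          (ENNReal.ofReal (exp (-(t * x))) * gammaPDF a r x) :=
        setLIntegral_le_lintegral _ _
    _ = ENNReal.ofReal (exp (t * c) * (r / (r + t)) ^ a) := by
        rw [lintegral_const_mul' _ _ ENNReal.ofReal_ne_top,
          lintegral_exp_mul_gammaPDF ha hr.le (by linarith), ← ENNReal.ofReal_mul (exp_nonneg _)]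

end ProbabilityTheory

theorem stmt_4_general (n : ℕ) (hn : 0 < n) (τ : ℝ) :
    chiSqMeasure n (Set.Iic ((n : ℝ) / (τ ^ 2 + 1))) ≤
      ENNReal.ofReal (Real.exp (-((n : ℝ) / 4) * (τ ^ 2 / (τ ^ 2 + 1)) ^ 2)) := by
  set s := τ ^ 2 / (τ ^ 2 + 1) with hs_def
  have hrate : (1 / 2 : ℝ) / (1 / 2 + τ ^ 2 / 2) = 1 - s := by rw [hs_def]; field_simp; ring
  have hs₁ : 0 < 1 - s := by rw [← hrate]; positivity
  refine (gammaMeasure_Iic_le (t := τ ^ 2 / 2) (by positivity) one_half_pos (by positivity)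
    _).trans (ENNReal.ofReal_le_ofReal ?_)
  calc exp (τ ^ 2 / 2 * (n / (τ ^ 2 + 1))) * ((1 / 2) / (1 / 2 + τ ^ 2 / 2)) ^ ((n : ℝ) / 2)
      = ((1 - s) * exp s) ^ ((n : ℝ) / 2) := by
        rw [show τ ^ 2 / 2 * (n / (τ ^ 2 + 1)) = s * (n / 2) by ring, hrate, exp_mul,
          mul_rpow hs₁.le (exp_nonneg _), mul_comm]
    _ ≤ exp (-(s ^ 2 / 2)) ^ ((n : ℝ) / 2) := by
        have := one_sub_mul_exp_le_exp_neg_sq_div_two (x := s) (by positivity)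
        gcongr
    _ = exp (-((n : ℝ) / 4) * s ^ 2) := by rw [← exp_mul]; ring_nf

theorem stmt_4 (n : ℕ) (hn : 0 < n) (τ : ℝ) (hτ : 0 ≤ τ) :
    chiSqMeasure n (Set.Iic ((n : ℝ) / (τ ^ 2 + 1))) ≤
      ENNReal.ofReal (Real.exp (-((n : ℝ) / 4) * (τ ^ 2 / (τ ^ 2 + 1)) ^ 2)) :=
  stmt_4_general n hn τ
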